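/- If s,h ⊨ Sorted(Σ) ∧ Σ, then the addresses listed by the atoms of Σ (under s) are exactly Dom(h), and the least element of Dom(h) (when Σ is nonempty, i.e., not all-emp) is the address of the first non-emp atom of Σ. -/

import Mathlib

abbrev Var := ℕ
abbrev Store := Var → ℕ
abbrev Heap := ℕ → Option ℕ

def Dom (h : Heap) : Set ℕ := {n | h n ≠ none}

def hunion (h1 h2 : Heap) : Heap := fun n =>
  match h1 n with
  | some v => some v
  | none => h2 n

def hempty : Heap := fun _ => none

inductive Term
  | var : Var → Term
  | const : ℕ → Term
  | add : Term → Term → Term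

def Term.eval (s : Store) : Term → ℕ
  | .var x => s x
  | .const n => n
  | .add t u => t.eval s + u.eval s

def Term.FV : Term → Set Var
  | .var x => {x}
  | .const _ => ∅
  | .add t u => t.FV ∪ u.FV

inductive Formula
  | eq : Term → Term → Formula
  | and : Formula → Formula → Formula
  | not : Formula → Formula
  | ex : Var → Formula → Formula
  | emp : Formula
  | pto : Term → Term → Formula
  | arr : Term → Term → Formula
  | sep : Formula → Formula → Formula

def sat (s : Store) (h : Heap) : Formula → Prop
  | .eq t u => t.eval s = u.eval s
  | .and f g => sat s h f ∧ sat s h g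
  | .not f => ¬ sat s h f
  | .ex x f => ∃ a : ℕ, sat (Function.update s x a) h f
  | .emp => Dom h = ∅
  | .pto t u => Dom h = {t.eval s} ∧ h (t.eval s) = some (u.eval s)
  | .arr t u => t.eval s ≤ u.eval s ∧ Dom h = Set.Icc (t.eval s) (u.eval s)
  | .sep f g => ∃ h1 h2 : Heap, Dom h1 ∩ Dom h2 = ∅ ∧ h = hunion h1 h2 ∧ sat s h1 f ∧ sat s h2 g

def Formula.FV : Formula → Set Var
  | .eq t u => t.FV ∪ u.FV
  | .and f g => f.FV ∪ g.FV
  | .not f => f.FV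
  | .ex x f => f.FV \ {x}
  | .emp => ∅
  | .pto t u => t.FV ∪ u.FV
  | .arr t u => t.FV ∪ u.FV
  | .sep f g => f.FV ∪ g.FV

inductive Atom
  | emp : Atom
  | pto : Term → Term → Atom
  | arr : Term → Term → Atom

abbrev Spatial := List Atom

def satAtom (s : Store) (h : Heap) : Atom → Prop
  | .emp => Dom h = ∅
  | .pto t u => Dom h = {t.eval s} ∧ h (t.eval s) = some (u.eval s)
  | .arr t u => t.eval s ≤ u.eval s ∧ Dom h = Set.Icc (t.eval s) (u.eval s)

def satSp (s : Store) (h : Heap) : Spatial → Prop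
  | [] => Dom h = ∅
  | a :: sg => ∃ h1 h2 : Heap, Dom h1 ∩ Dom h2 = ∅ ∧ h = hunion h1 h2 ∧
      satAtom s h1 a ∧ satSp s h2 sg

def ltSp (s : Store) (v : ℕ) : Spatial → Prop
  | [] => True
  | .emp :: sg => ltSp s v sg
  | .pto t _ :: _ => v < t.eval s
  | .arr t _ :: _ => v < t.eval s

def sorted' (s : Store) : Spatial → Prop
  | [] => True
  | .emp :: sg => sorted' s sg
  | .pto t _ :: sg => ltSp s (t.eval s) sg ∧ sorted' s sg
  | .arr t u :: sg => t.eval s ≤ u.eval s ∧ ltSp s (u.eval s) sg ∧ sorted' s sg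

def sortedSp (s : Store) (sg : Spatial) : Prop := ltSp s 0 sg ∧ sorted' s sg

def SDom (s : Store) : Spatial → Set ℕ
  | [] => ∅
  | .emp :: sg => SDom s sg
  | .pto t _ :: sg => {t.eval s} ∪ SDom s sg
  | .arr t u :: sg => Set.Icc (t.eval s) (u.eval s) ∪ SDom s sg

/-- address of the first non-emp atom of a spatial formula (if any) -/
def firstAddr (s : Store) : Spatial → Option ℕ
  | [] => none
  | .emp :: sg => firstAddr s sg
  | .pto t _ :: _ => some (t.eval s)
  | .arr t _ :: _ => some (t.eval s)

/-! Splitting the heap along the separating conjunction shows that `Dom h` is the union of the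
address sets of the atoms. Sortedness puts the address of each non-emp atom strictly below every
address listed after it, so the first one is the least. -/

section

variable (s : Store)

lemma Dom_hunion (h1 h2 : Heap) : Dom (hunion h1 h2) = Dom h1 ∪ Dom h2 := by
  ext n
  change hunion h1 h2 n ≠ none ↔ h1 n ≠ none ∨ h2 n ≠ none
  unfold hunion
  cases h1 n <;> simp

lemma Dom_eq_SDom_of_satSp {h : Heap} {sg : Spatial} (hsat : satSp s h sg) :
    Dom h = SDom s sg := by
  induction sg generalizing h with
  | nil => exact hsat
  | cons a sg ih =>
    obtain ⟨h1, h2, -, rfl, ha, hrest⟩ := hsat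
    rw [Dom_hunion, ih hrest]
    cases a with
    | emp => rw [ha, Set.empty_union]; rfl
    | pto t u => rw [ha.1]; rfl
    | arr t u => rw [ha.2]; rfl

lemma lt_of_ltSp_of_mem_SDom {sg : Spatial} (hs : sorted' s sg) {v : ℕ} (hv : ltSp s v sg)
    {x : ℕ} (hx : x ∈ SDom s sg) : v < x := by
  induction sg generalizing v with
  | nil => exact absurd hx (Set.notMem_empty x)
  | cons a sg ih =>
    cases a with
    | emp => exact ih hs hv hx
    | pto t u =>
      rcases hx with rfl | hx
      · exact hv
      · exact hv.trans (ih hs.2 hs.1 hx)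
    | arr t u =>
      rcases hx with hx | hx
      · exact hv.trans_le hx.1
      · exact hv.trans (hs.1.trans_lt (ih hs.2.2 hs.2.1 hx))

lemma isLeast_SDom_of_firstAddr {sg : Spatial} (hs : sorted' s sg) {a : ℕ}
    (ha : firstAddr s sg = some a) : IsLeast (SDom s sg) a := by
  induction sg with
  | nil => cases ha
  | cons b sg ih =>
    cases b with
    | emp => exact ih hs ha
    | pto t u =>
      cases ha
      refine ⟨Or.inl rfl, ?_⟩
      rintro x (rfl | hx)
      · exact le_rfl
      · exact (lt_of_ltSp_of_mem_SDom s hs.2 hs.1 hx).le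
    | arr t u =>
      cases ha
      refine ⟨Or.inl ⟨le_rfl, hs.1⟩, ?_⟩
      rintro x (hx | hx)
      · exact hx.1
      · exact hs.1.trans (lt_of_ltSp_of_mem_SDom s hs.2.2 hs.2.1 hx).le

end

/-- if `s,h ⊨ Sorted(Σ) ∧ Σ` then the addresses listed by `Σ`
are exactly `Dom(h)`, and the least element of `Dom(h)` is the address of the
first non-emp atom of `Σ` (when `Σ` is not all-emp). -/
theorem stmt11 (s : Store) (h : Heap) (sg : Spatial)
    (hs : sortedSp s sg) (hsat : satSp s h sg) :
    Dom h = SDom s sg ∧ ∀ a : ℕ, firstAddr s sg = some a → IsLeast (Dom h) a := by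
  have hdom := Dom_eq_SDom_of_satSp s hsat
  exact ⟨hdom, fun a ha => hdom ▸ isLeast_SDom_of_firstAddr s hs.2 ha⟩
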